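/- Fix n ≥ 1. In the polynomial ring O_amb = ℤ[a_{ij}, z_j], there is the ideal colon equality (z_1, f_1, ..., f_n) : (z_1, ..., z_{n+1}) = (z_1, f_1, ..., f_n, Δ_1). -/

import Mathlib

open MvPolynomial

/-- The ambient polynomial ring `O_amb = ℤ[a_{ij}, z_j]`, `1 ≤ i ≤ n`, `1 ≤ j ≤ n+1`. -/
noncomputable abbrev Oamb (n : ℕ) : Type := MvPolynomial ((Fin n × Fin (n+1)) ⊕ Fin (n+1)) ℤ

/-- The generic matrix entry `a_{ij}` as an element of `O_amb`. -/
noncomputable def av {n : ℕ} (i : Fin n) (j : Fin (n+1)) : Oamb n := X (Sum.inl (i, j))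

/-- The variable `z_j` as an element of `O_amb`. -/
noncomputable def zv {n : ℕ} (j : Fin (n+1)) : Oamb n := X (Sum.inr j)

/-- The generic linear form `f_i = Σ_j a_{ij} z_j`. -/
noncomputable def fv {n : ℕ} (i : Fin n) : Oamb n := ∑ j, av i j * zv j

/-- `Δ₁`: the determinant of the `n × n` submatrix of `(a_{ij})` obtained by deleting the
first column. -/
noncomputable def Δ₁ (n : ℕ) : Oamb n := Matrix.det (Matrix.of fun i j : Fin n => av i j.succ)

namespace ResInt

open Finset

abbrev Sig : Type := (ℕ × ℕ) ⊕ ℕ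
abbrev PP : Type := MvPolynomial Sig ℤ

noncomputable def Av (i j : ℕ) : PP := X (Sum.inl (i, j))
noncomputable def Zv (j : ℕ) : PP := X (Sum.inr j)
/-- the generic bilinear forms: row `i`, using columns `0..m-1`. -/
noncomputable def rr (m i : ℕ) : PP := ∑ j : Fin m, Av i (j : ℕ) * Zv (j : ℕ)
/-- ideal generated by the first `k` rows (with `m` columns). -/
noncomputable def WW (k m : ℕ) : Ideal PP :=
  Ideal.span (Set.range fun i : Fin k => rr m (i : ℕ))
noncomputable def MatA (m : ℕ) : Matrix (Fin m) (Fin m) PP :=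
  Matrix.of fun i j => Av (i : ℕ) (j : ℕ)
noncomputable def Dd (m : ℕ) : PP := (MatA m).det
noncomputable def Vhat (m : ℕ) : Matrix (Fin (m+1)) (Fin (m+1)) PP :=
  Matrix.of fun i j => if (j : ℕ) = m then 0 else Av (i : ℕ) (j : ℕ)
noncomputable def cvF (m : ℕ) (i : Fin (m+1)) : PP := (Vhat m).adjugate (Fin.last m) i
noncomputable def cN (m i : ℕ) : PP := if h : i < m + 1 then cvF m ⟨i, h⟩ else 0
noncomputable def cgen (k m i : ℕ) : PP := if k = m + 1 then cN m i else 0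
noncomputable def czD (k m : ℕ) : PP := if k = m then Dd m else 0

-- ### the "kill one variable" evaluation
noncomputable def Ev (t : Sig) : PP →+* PP :=
  eval₂Hom C (fun s => if s = t then 0 else X s)

@[simp] lemma Ev_X (t : Sig) (s : Sig) : Ev t (X s) = if s = t then 0 else X s := by
  simp [Ev]

lemma Ev_C (t : Sig) (r : ℤ) : Ev t (C r) = C r := by simp [Ev]

lemma sub_Ev_mem (t : Sig) (p : PP) : p - Ev t p ∈ Ideal.span {X t} := by
  induction p using MvPolynomial.induction_on with
  | C r => simp [Ev_C]
  | add p q hp hq =>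
      have : p + q - Ev t (p + q) = (p - Ev t p) + (q - Ev t q) := by
        rw [map_add]; ring
      rw [this]; exact Ideal.add_mem _ hp hq
  | mul_X p s hp =>
      have : p * X s - Ev t (p * X s)
          = (p - Ev t p) * X s + Ev t p * (X s - Ev t (X s)) := by
        rw [map_mul]; ring
      rw [this]
      refine Ideal.add_mem _ (Ideal.mul_mem_right _ _ hp) ?_
      by_cases h : s = t
      · subst h; simp [Ev_X]
        exact Ideal.mul_mem_left _ _ (Ideal.subset_span rfl)
      · simp [Ev_X, h]

@[simp] lemma Ev_Av (t : Sig) (i j : ℕ) (h : Sum.inl (i,j) ≠ t) : Ev t (Av i j) = Av i j := by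
  simp [Av, Ev_X, h]

lemma Ev_Zv_ne (M j : ℕ) (h : j ≠ M) : Ev (Sum.inr M) (Zv j) = Zv j := by
  simp [Zv, Ev_X, h]

@[simp] lemma Ev_Zv_self (M : ℕ) : Ev (Sum.inr M) (Zv M) = 0 := by simp [Zv, Ev_X]

lemma Ev_rr (M i : ℕ) : Ev (Sum.inr M) (rr (M+1) i) = rr M i := by
  rw [rr, map_sum, Fin.sum_univ_castSucc]
  simp only [Fin.coe_castSucc, Fin.val_last, map_mul]
  rw [Ev_Zv_self]
  simp only [mul_zero, add_zero]
  rw [rr]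
  apply Finset.sum_congr rfl
  intro j _
  rw [Ev_Av _ _ _ (by simp), Ev_Zv_ne _ _ (by omega)]

/-- separate the variables of row `ρ` : `PP → (MvPolynomial ℕ PP)`. -/
noncomputable def Ex (ρ : ℕ) : PP →+* MvPolynomial ℕ PP :=
  eval₂Hom ((C : PP →+* MvPolynomial ℕ PP).comp (C : ℤ →+* PP))
    (fun s => match s with
      | Sum.inl (i, j) => if i = ρ then X j else C (X (Sum.inl (i,j)))
      | Sum.inr j => C (X (Sum.inr j)))

/-- substitute the row variables back. -/
noncomputable def Bk (ρ : ℕ) : MvPolynomial ℕ PP →+* PP :=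
  eval₂Hom (RingHom.id PP) (fun j => Av ρ j)

@[simp] lemma Ex_Av (ρ i j : ℕ) : Ex ρ (Av i j) = if i = ρ then X j else C (Av i j) := by
  simp [Ex, Av]

@[simp] lemma Ex_Zv (ρ j : ℕ) : Ex ρ (Zv j) = C (Zv j) := by simp [Ex, Zv]

lemma Bk_Ex (ρ : ℕ) (p : PP) : Bk ρ (Ex ρ p) = p := by
  have h : (Bk ρ).comp (Ex ρ) = RingHom.id PP := by
    apply MvPolynomial.ringHom_ext
    · intro r; simp [Ex, Bk]
    · intro s
      rcases s with ⟨i, j⟩ | j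
      · simp only [RingHom.comp_apply, RingHom.id_apply]
        rw [show (X (Sum.inl (i,j)) : PP) = Av i j from rfl, Ex_Av]
        by_cases h : i = ρ
        · subst h; simp [Bk]
        · simp [h, Bk]
      · simp only [RingHom.comp_apply, RingHom.id_apply]
        rw [show (X (Sum.inr j) : PP) = Zv j from rfl, Ex_Zv]
        simp [Bk]
  calc Bk ρ (Ex ρ p) = (Bk ρ).comp (Ex ρ) p := rfl
  _ = p := by rw [h]; rfl

/-- coefficients of the image of a member of a span of "row-free" generators stay in the span. -/
lemma coeff_Ex_mem (ρ : ℕ) {G : Set PP} (hG : ∀ g ∈ G, Ex ρ g = C g)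
    {p : PP} (hp : p ∈ Ideal.span G) : ∀ ν : ℕ →₀ ℕ,
    coeff ν (Ex ρ p) ∈ Ideal.span G := by
  induction hp using Submodule.span_induction with
  | mem g hg =>
      intro ν
      rw [hG g hg, MvPolynomial.coeff_C]
      split
      · exact Ideal.subset_span hg
      · exact Ideal.zero_mem _
  | zero => simp
  | add x y _ _ hx hy =>
      intro ν
      rw [map_add, MvPolynomial.coeff_add]; exact Ideal.add_mem _ (hx ν) (hy ν)
  | smul r x _ hx =>
      intro ν
      have hrx : r • x = r * x := rfl
      rw [hrx, map_mul, MvPolynomial.coeff_mul]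
      refine Ideal.sum_mem _ (fun uv _ => ?_)
      exact Ideal.mul_mem_left _ _ (hx uv.2)

/-- reconstruct membership from coefficients. -/
lemma mem_of_coeff_Ex (ρ : ℕ) {J : Ideal PP} {p : PP}
    (h : ∀ ν, coeff ν (Ex ρ p) ∈ J) : p ∈ J := by
  have hp : p = Bk ρ (Ex ρ p) := (Bk_Ex ρ p).symm
  rw [hp, Bk, coe_eval₂Hom, eval₂_eq]
  refine Ideal.sum_mem _ (fun d _ => ?_)
  exact Ideal.mul_mem_right _ _ (h d)

/-- pairing of the c-vector with an arbitrary column. -/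
lemma cvF_pair (m : ℕ) (b : Fin (m+1) → PP) :
    ∑ i : Fin (m+1), cvF m i * b i = ((Vhat m).updateCol (Fin.last m) b).det := by
  have h := Matrix.cramer_eq_adjugate_mulVec (Vhat m) b
  have h2 := congrFun h (Fin.last m)
  rw [Matrix.cramer_apply] at h2
  rw [h2]
  simp [Matrix.mulVec, dotProduct, cvF]

/-- (c1): the c-vector is orthogonal to all the generic columns `j < m`. -/
lemma cvF_orth (m : ℕ) (j : Fin m) :
    ∑ i : Fin (m+1), cvF m i * Av (i : ℕ) (j : ℕ) = 0 := by
  rw [cvF_pair]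
  apply Matrix.det_zero_of_column_eq (i := (j.castSucc : Fin (m+1))) (j := Fin.last m)
  · exact Fin.ne_of_lt (Fin.castSucc_lt_last j)
  · intro k
    rw [Matrix.updateCol_self, Matrix.updateCol_apply]
    have hne : ¬((j.castSucc : Fin (m+1)) = Fin.last m) :=
      Fin.ne_of_lt (Fin.castSucc_lt_last j)
    simp only [hne, if_false]
    simp [Vhat, Nat.ne_of_lt j.is_lt]

/-- (c2): the last entry of the c-vector is the determinant of the first `m` rows. -/
lemma cvF_last (m : ℕ) : cvF m (Fin.last m) = Dd m := by
  have hp := cvF_pair m (Pi.single (Fin.last m) 1)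
  rw [Finset.sum_eq_single (Fin.last m)] at hp
  · rw [Pi.single_eq_same, mul_one] at hp
    rw [hp, Matrix.det_succ_column _ (Fin.last m), Finset.sum_eq_single (Fin.last m)]
    · have hsub : ((Vhat m).updateCol (Fin.last m) (Pi.single (Fin.last m) 1)).submatrix
          (Fin.last m).succAbove (Fin.last m).succAbove = MatA m := by
        ext i j
        rw [Fin.succAbove_last, Matrix.submatrix_apply, Matrix.updateCol_apply]
        have hne : ¬((j.castSucc : Fin (m+1)) = Fin.last m) :=
          Fin.ne_of_lt (Fin.castSucc_lt_last j)
        simp [hne, Vhat, Nat.ne_of_lt j.is_lt, MatA]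
      rw [hsub, Matrix.updateCol_self, Pi.single_eq_same, Fin.val_last]
      have : ((-1 : PP)) ^ (m + m) = 1 := Even.neg_one_pow ⟨m, rfl⟩
      rw [this, one_mul, one_mul]
      rfl
    · intro i _ hne
      rw [Matrix.updateCol_self, Pi.single_eq_of_ne hne]
      simp
    · intro h; exact absurd (Finset.mem_univ _) h
  · intro i _ hne
    rw [Pi.single_eq_of_ne hne, mul_zero]
  · intro h; exact absurd (Finset.mem_univ _) h

/-- (c3): pairing the c-vector with the next generic column gives the full determinant. -/
lemma cvF_pair_next (m : ℕ) :
    ∑ i : Fin (m+1), cvF m i * Av (i : ℕ) m = Dd (m+1) := by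
  rw [cvF_pair]
  congr 1
  refine Matrix.ext (fun i j => ?_)
  rw [Matrix.updateCol_apply]
  by_cases h : j = Fin.last m
  · subst h; simp [MatA, Fin.val_last]
  · have hj : (j : ℕ) ≠ m := by
      intro hc; exact h (Fin.ext hc)
    simp [Vhat, hj, MatA, h]

/-- Cramer: `Z j * Dd m` lies in the ideal of the square system. -/
lemma Z_mul_D_mem (m : ℕ) (j : Fin m) : Zv (j : ℕ) * Dd m ∈ WW m m := by
  have key : (MatA m).mulVec (fun j : Fin m => Zv (j : ℕ)) = fun i : Fin m => rr m (i : ℕ) := by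
    funext i
    simp [Matrix.mulVec, dotProduct, MatA, rr]
  have h : (Dd m) • (fun j : Fin m => Zv (j : ℕ))
      = (MatA m).adjugate.mulVec ((MatA m).mulVec (fun j : Fin m => Zv (j : ℕ))) := by
    rw [Matrix.mulVec_mulVec, Matrix.adjugate_mul, Matrix.smul_mulVec,
      Matrix.one_mulVec]
    rfl
  have h2 := congrFun h j
  simp only [Pi.smul_apply, smul_eq_mul, key] at h2
  rw [mul_comm]
  rw [h2]
  simp only [Matrix.mulVec, dotProduct]
  refine Ideal.sum_mem _ (fun i _ => ?_)
  exact Ideal.mul_mem_left _ _ (Ideal.subset_span ⟨i, rfl⟩)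

/-- (F1): the `cgen` vector is a syzygy. -/
lemma cgen_syz (k m : ℕ) : ∑ i : Fin k, cgen k m (i : ℕ) * rr m (i : ℕ) = 0 := by
  unfold cgen
  split
  · next hk =>
      subst hk
      have : ∀ i : Fin (m+1), cN m (i : ℕ) = cvF m i := by
        intro i; rw [cN, dif_pos i.is_lt]
      calc ∑ i : Fin (m+1), cN m (i : ℕ) * rr m (i : ℕ)
          = ∑ i : Fin (m+1), ∑ j : Fin m, cvF m i * Av (i : ℕ) (j : ℕ) * Zv (j : ℕ) := by
            apply Finset.sum_congr rfl; intro i _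
            rw [this i, rr, Finset.mul_sum]
            apply Finset.sum_congr rfl; intro j _; ring
        _ = ∑ j : Fin m, (∑ i : Fin (m+1), cvF m i * Av (i : ℕ) (j : ℕ)) * Zv (j : ℕ) := by
            rw [Finset.sum_comm]
            apply Finset.sum_congr rfl; intro j _
            rw [Finset.sum_mul]
        _ = 0 := by
            apply Finset.sum_eq_zero; intro j _
            rw [cvF_orth, zero_mul]
  · simp

/-- (F2'): evaluation of `cgen (k+1)` at the last row. -/
lemma cgen_last (k m : ℕ) (hk : k ≤ m) : cgen (k+1) m k = czD k m := by
  unfold cgen czD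
  by_cases h : k = m
  · subst h
    rw [if_pos rfl, if_pos rfl, cN, dif_pos (by omega)]
    have : (⟨k, by omega⟩ : Fin (k+1)) = Fin.last k := by
      apply Fin.ext; simp [Fin.val_last]
    rw [this, cvF_last]
  · rw [if_neg (by omega), if_neg h]

/-- (F3): pairing `cgen k M` against the column `M`. -/
lemma cgen_pair_next (k M : ℕ) (hk : k ≤ M + 1) :
    ∑ i : Fin k, cgen k M (i : ℕ) * Av (i : ℕ) M = czD k (M+1) := by
  unfold cgen czD
  by_cases h : k = M + 1
  · subst h
    simp only [eq_self_iff_true, if_true]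
    have hc : ∀ i : Fin (M+1), cN M (i : ℕ) = cvF M i := by
      intro i; rw [cN, dif_pos i.is_lt]
    rw [← cvF_pair_next M]
    apply Finset.sum_congr rfl
    intro i _; rw [hc i]
  · have h2 : ¬ (k = M + 1) := h
    simp [h2]

lemma rr_succ (M x : ℕ) : rr (M+1) x = rr M x + Av x M * Zv M := by
  rw [rr, Fin.sum_univ_castSucc]; rfl

lemma key_pt (M p i : ℕ) :
    rr M p * rr (M+1) i - rr M i * rr (M+1) p
      = Zv M * (Av i M * rr (M+1) p - Av p M * rr (M+1) i) := by
  have hp := rr_succ M p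
  have hi := rr_succ M i
  have hp' : rr M p = rr (M+1) p - Av p M * Zv M := by rw [hp]; ring
  have hi' : rr M i = rr (M+1) i - Av i M * Zv M := by rw [hi]; ring
  rw [hp', hi']; ring

/-- the colon certificate lemma: colon of the row ideal by the last variable `Z M`. -/
lemma cz (k M : ℕ) (hk : k ≤ M + 1)
    (hst : ∀ s : Fin k → PP, (∑ i, s i * rr M (i : ℕ)) = 0 →
      ∃ (lam : Fin k → Fin k → PP) (h : PP), ∀ i,
        s i = (∑ p, (lam i p - lam p i) * rr M (p : ℕ)) + h * cgen k M (i : ℕ))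
    (w : PP) (hw : w * Zv M ∈ WW k (M+1)) :
    w ∈ WW k (M+1) ⊔ Ideal.span {czD k (M+1)} := by
  rw [WW, Ideal.mem_span_range_iff_exists_fun] at hw
  obtain ⟨g, hg⟩ := hw
  set gh : Fin k → PP := fun i => Ev (Sum.inr M) (g i) with hgh
  have hsyz : ∑ i, gh i * rr M (i : ℕ) = 0 := by
    have := congrArg (Ev (Sum.inr M)) hg
    rw [map_sum, map_mul, Ev_Zv_self, mul_zero] at this
    rw [← this]
    apply Finset.sum_congr rfl
    intro i _
    rw [map_mul, Ev_rr]
  obtain ⟨lam, h, hlam⟩ := hst gh hsyz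
  have hq : ∀ i, ∃ q : PP, g i = gh i + q * Zv M := by
    intro i
    obtain ⟨a, ha⟩ := Ideal.mem_span_singleton'.mp (sub_Ev_mem (Sum.inr M) (g i))
    refine ⟨a, ?_⟩
    have h2 : a * Zv M = g i - gh i := by rw [hgh]; exact ha
    rw [h2]; ring
  choose q hqq using hq
  -- the target element
  set E : PP := (∑ i : Fin k, ∑ p : Fin k,
      lam i p * (Av (i : ℕ) M * rr (M+1) (p : ℕ) - Av (p : ℕ) M * rr (M+1) (i : ℕ)))
    + h * czD k (M+1) + ∑ i : Fin k, q i * rr (M+1) (i : ℕ) with hE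
  have main : Zv M * w = Zv M * E := by
    rw [mul_comm (Zv M) w, ← hg]
    have step1 : ∑ i : Fin k, g i * rr (M+1) (i : ℕ)
        = ∑ i : Fin k, gh i * rr (M+1) (i : ℕ)
          + Zv M * ∑ i : Fin k, q i * rr (M+1) (i : ℕ) := by
      rw [Finset.mul_sum, ← Finset.sum_add_distrib]
      apply Finset.sum_congr rfl
      intro i _
      rw [hqq i]; ring
    have step2 : ∑ i : Fin k, gh i * rr (M+1) (i : ℕ)
        = (∑ i : Fin k, ∑ p : Fin k, (lam i p - lam p i) * rr M (p : ℕ) * rr (M+1) (i : ℕ))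
          + h * (∑ i : Fin k, cgen k M (i : ℕ) * rr (M+1) (i : ℕ)) := by
      rw [Finset.mul_sum, ← Finset.sum_add_distrib]
      apply Finset.sum_congr rfl
      intro i _
      rw [hlam i, add_mul, Finset.sum_mul, mul_assoc]
    -- antisymmetrization
    have step3 : (∑ i : Fin k, ∑ p : Fin k, (lam i p - lam p i) * rr M (p : ℕ) * rr (M+1) (i : ℕ))
        = ∑ i : Fin k, ∑ p : Fin k, lam i p *
            (rr M (p : ℕ) * rr (M+1) (i : ℕ) - rr M (i : ℕ) * rr (M+1) (p : ℕ)) := by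
      have expand : ∀ i p : Fin k, (lam i p - lam p i) * rr M (p : ℕ) * rr (M+1) (i : ℕ)
          = lam i p * (rr M (p : ℕ) * rr (M+1) (i : ℕ))
            - lam p i * (rr M (p : ℕ) * rr (M+1) (i : ℕ)) := by intro i p; ring
      calc ∑ i : Fin k, ∑ p : Fin k, (lam i p - lam p i) * rr M (p : ℕ) * rr (M+1) (i : ℕ)
          = ∑ i : Fin k, ∑ p : Fin k, (lam i p * (rr M (p : ℕ) * rr (M+1) (i : ℕ))
              - lam p i * (rr M (p : ℕ) * rr (M+1) (i : ℕ))) :=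
            Finset.sum_congr rfl (fun i _ => Finset.sum_congr rfl (fun p _ => expand i p))
        _ = (∑ i : Fin k, ∑ p : Fin k, lam i p * (rr M (p : ℕ) * rr (M+1) (i : ℕ)))
              - ∑ i : Fin k, ∑ p : Fin k, lam p i * (rr M (p : ℕ) * rr (M+1) (i : ℕ)) := by
            rw [← Finset.sum_sub_distrib]
            exact Finset.sum_congr rfl (fun i _ => by rw [Finset.sum_sub_distrib])
        _ = (∑ i : Fin k, ∑ p : Fin k, lam i p * (rr M (p : ℕ) * rr (M+1) (i : ℕ)))
              - ∑ i : Fin k, ∑ p : Fin k, lam i p * (rr M (i : ℕ) * rr (M+1) (p : ℕ)) := by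
            congr 1
            rw [Finset.sum_comm]
        _ = ∑ i : Fin k, ∑ p : Fin k, lam i p *
              (rr M (p : ℕ) * rr (M+1) (i : ℕ) - rr M (i : ℕ) * rr (M+1) (p : ℕ)) := by
            rw [← Finset.sum_sub_distrib]
            refine Finset.sum_congr rfl (fun i _ => ?_)
            rw [← Finset.sum_sub_distrib]
            exact Finset.sum_congr rfl (fun p _ => by ring)
    have step4 : ∑ i : Fin k, ∑ p : Fin k, lam i p *
            (rr M (p : ℕ) * rr (M+1) (i : ℕ) - rr M (i : ℕ) * rr (M+1) (p : ℕ))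
        = Zv M * ∑ i : Fin k, ∑ p : Fin k,
            lam i p * (Av (i : ℕ) M * rr (M+1) (p : ℕ) - Av (p : ℕ) M * rr (M+1) (i : ℕ)) := by
      rw [Finset.mul_sum]
      apply Finset.sum_congr rfl
      intro i _
      rw [Finset.mul_sum]
      apply Finset.sum_congr rfl
      intro p _
      rw [key_pt M (p : ℕ) (i : ℕ)]
      ring
    have step5 : ∑ i : Fin k, cgen k M (i : ℕ) * rr (M+1) (i : ℕ) = Zv M * czD k (M+1) := by
      have : ∀ i : Fin k, cgen k M (i : ℕ) * rr (M+1) (i : ℕ)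
          = cgen k M (i : ℕ) * rr M (i : ℕ) + cgen k M (i : ℕ) * Av (i : ℕ) M * Zv M := by
        intro i; rw [rr_succ]; ring
      rw [Finset.sum_congr rfl (fun i _ => this i), Finset.sum_add_distrib, cgen_syz,
        zero_add, ← Finset.sum_mul, cgen_pair_next k M hk]
      ring
    rw [step1, step2, step3, step4, step5, hE]
    ring
  have hZ : (Zv M) ≠ 0 := X_ne_zero _
  have hwE : w = E := mul_left_cancel₀ hZ main
  rw [hwE, hE]
  apply Submodule.add_mem
  apply Submodule.add_mem
  · apply Submodule.mem_sup_left
    refine Ideal.sum_mem _ (fun i _ => Ideal.sum_mem _ (fun p _ => ?_))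
    have h1 : rr (M+1) (p : ℕ) ∈ WW k (M+1) := Ideal.subset_span ⟨p, rfl⟩
    have h2 : rr (M+1) (i : ℕ) ∈ WW k (M+1) := Ideal.subset_span ⟨i, rfl⟩
    rw [mul_sub]
    exact Submodule.sub_mem _
      (Ideal.mul_mem_left _ _ (Ideal.mul_mem_left _ _ h1))
      (Ideal.mul_mem_left _ _ (Ideal.mul_mem_left _ _ h2))
  · exact Submodule.mem_sup_right (Ideal.mul_mem_left _ _ (Ideal.subset_span rfl))
  · exact Submodule.mem_sup_left
      (Ideal.sum_mem _ (fun i _ => Ideal.mul_mem_left _ _ (Ideal.subset_span ⟨i, rfl⟩)))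

-- ## freeness computations
lemma Ex_rr (ρ m i : ℕ) (h : i ≠ ρ) : Ex ρ (rr m i) = C (rr m i) := by
  rw [rr, map_sum, map_sum]
  apply Finset.sum_congr rfl
  intro j _
  rw [map_mul, map_mul, Ex_Av, Ex_Zv, if_neg h]

lemma Ex_rr_self (ρ m : ℕ) : Ex ρ (rr m ρ) = ∑ j : Fin m, X (j : ℕ) * C (Zv (j : ℕ)) := by
  rw [rr, map_sum]
  apply Finset.sum_congr rfl
  intro j _
  rw [map_mul, Ex_Av, Ex_Zv, if_pos rfl]


-- ## the coefficient relation
lemma coeff_relation (ρ m : ℕ) (w : PP) (ν : ℕ →₀ ℕ) :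
    coeff ν (Ex ρ (w * rr m ρ))
      = ∑ j : Fin m, (if (j : ℕ) ∈ ν.support then
          Zv (j : ℕ) * coeff (ν - Finsupp.single (j : ℕ) 1) (Ex ρ w) else 0) := by
  rw [map_mul, Ex_rr_self, Finset.mul_sum, MvPolynomial.coeff_sum]
  apply Finset.sum_congr rfl
  intro j _
  have hh : Ex ρ w * (X (j : ℕ) * C (Zv (j : ℕ)))
      = (C (Zv (j : ℕ)) * Ex ρ w) * X (j : ℕ) := by ring
  rw [hh, coeff_mul_X']
  split
  · rw [coeff_C_mul]
  · rfl

/-- the fresh-row colon lemma. -/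
lemma fr (k M : ℕ)
    (hcz : ∀ u : PP, u * Zv M ∈ WW k (M+1) → u ∈ WW k (M+1) ⊔ Ideal.span {czD k (M+1)})
    (hczd : ∀ j : Fin (M+1), Zv (j : ℕ) * czD k (M+1) ∈ WW k (M+1))
    (w : PP) (hw : w * rr (M+1) k ∈ WW k (M+1)) :
    w ∈ WW k (M+1) ⊔ Ideal.span {czD k (M+1)} := by
  set V : Ideal PP := WW k (M+1) ⊔ Ideal.span {czD k (M+1)} with hV
  have hG : ∀ g ∈ (Set.range fun i : Fin k => rr (M+1) (i : ℕ)), Ex k g = C g := by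
    rintro g ⟨i, rfl⟩
    exact Ex_rr k (M+1) i (Nat.ne_of_lt i.is_lt)
  have hrel : ∀ ν : ℕ →₀ ℕ,
      (∑ j : Fin (M+1), (if (j : ℕ) ∈ ν.support then
        Zv (j : ℕ) * coeff (ν - Finsupp.single (j : ℕ) 1) (Ex k w) else 0)) ∈ WW k (M+1) := by
    intro ν
    rw [← coeff_relation]
    exact coeff_Ex_mem k hG hw ν
  -- (H2): multiplying a member of V by a variable Z j lands in W
  have hH2 : ∀ (j : Fin (M+1)) (v : PP), v ∈ V → Zv (j : ℕ) * v ∈ WW k (M+1) := by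
    intro j v hv
    rw [hV] at hv
    obtain ⟨y, hy, z, hz, rfl⟩ := Submodule.mem_sup.mp hv
    obtain ⟨c, hc⟩ := Ideal.mem_span_singleton'.mp hz
    rw [mul_add]
    refine Ideal.add_mem _ (Ideal.mul_mem_left _ _ hy) ?_
    rw [← hc, show Zv (j:ℕ) * (c * czD k (M+1)) = c * (Zv (j:ℕ) * czD k (M+1)) by ring]
    exact Ideal.mul_mem_left _ _ (hczd j)
  -- the descending induction
  set D := (Ex k w).totalDegree with hD
  have KEY : ∀ t : ℕ, ∀ ν : ℕ →₀ ℕ, D + 1 ≤ ν M + t → coeff ν (Ex k w) ∈ V := by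
    intro t
    induction t with
    | zero =>
        intro ν hν
        rw [Nat.add_zero] at hν
        have hMs : M ∈ ν.support := by
          rw [Finsupp.mem_support_iff]
          omega
        have hle : ν M ≤ ∑ i ∈ ν.support, ν i :=
          Finset.single_le_sum (f := fun i => ν i) (fun _ _ => Nat.zero_le _) hMs
        have : coeff ν (Ex k w) = 0 :=
          coeff_eq_zero_of_totalDegree_lt (by omega)
        rw [this]; exact Submodule.zero_mem _
    | succ t ih =>
        intro ν hν
        set ν' : ℕ →₀ ℕ := ν + Finsupp.single M 1 with hν'
        have hsplit := hrel ν'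
        rw [Fin.sum_univ_castSucc] at hsplit
        have hlast : ((Fin.last M : Fin (M+1)) : ℕ) = M := Fin.val_last M
        have hν'M : ν' M = ν M + 1 := by
          rw [hν', Finsupp.add_apply, Finsupp.single_eq_same]
        have hMs : (M : ℕ) ∈ ν'.support := by
          rw [Finsupp.mem_support_iff]; omega
        have hsub : ν' - Finsupp.single M 1 = ν := by
          rw [hν']; exact add_tsub_cancel_right ν _
        have hlastterm : (if ((Fin.last M : Fin (M+1)) : ℕ) ∈ ν'.support then
            Zv ((Fin.last M : Fin (M+1)) : ℕ) *
              coeff (ν' - Finsupp.single ((Fin.last M : Fin (M+1)) : ℕ) 1) (Ex k w) else 0)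
            = Zv M * coeff ν (Ex k w) := by
          rw [hlast, if_pos hMs, hsub]
        rw [hlastterm] at hsplit
        have hother : ∀ j : Fin M, (if ((j.castSucc : Fin (M+1)) : ℕ) ∈ ν'.support then
            Zv ((j.castSucc : Fin (M+1)) : ℕ) *
              coeff (ν' - Finsupp.single ((j.castSucc : Fin (M+1)) : ℕ) 1) (Ex k w) else 0)
            ∈ WW k (M+1) := by
          intro j
          split
          · next hjs =>
              have hjM : ((j.castSucc : Fin (M+1)) : ℕ) ≠ M := by
                rw [Fin.coe_castSucc]; exact Nat.ne_of_lt j.is_lt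
              set μ : ℕ →₀ ℕ := ν' - Finsupp.single ((j.castSucc : Fin (M+1)) : ℕ) 1 with hμ
              have hcoord : μ M = ν M + 1 := by
                rw [hμ, Finsupp.tsub_apply, Finsupp.single_eq_of_ne' hjM, hν'M, Nat.sub_zero]
              have hmem : coeff μ (Ex k w) ∈ V := by
                apply ih
                omega
              exact hH2 j.castSucc _ hmem
          · exact Submodule.zero_mem _
        have hsum_other : (∑ j : Fin M, (if ((j.castSucc : Fin (M+1)) : ℕ) ∈ ν'.support then
            Zv ((j.castSucc : Fin (M+1)) : ℕ) *
              coeff (ν' - Finsupp.single ((j.castSucc : Fin (M+1)) : ℕ) 1) (Ex k w) else 0))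
            ∈ WW k (M+1) := Ideal.sum_mem _ (fun j _ => hother j)
        have hzw : Zv M * coeff ν (Ex k w) ∈ WW k (M+1) := by
          have : Zv M * coeff ν (Ex k w)
              = (∑ j : Fin M, (if ((j.castSucc : Fin (M+1)) : ℕ) ∈ ν'.support then
                  Zv ((j.castSucc : Fin (M+1)) : ℕ) *
                    coeff (ν' - Finsupp.single ((j.castSucc : Fin (M+1)) : ℕ) 1) (Ex k w) else 0)
                  + Zv M * coeff ν (Ex k w))
                - (∑ j : Fin M, (if ((j.castSucc : Fin (M+1)) : ℕ) ∈ ν'.support then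
                  Zv ((j.castSucc : Fin (M+1)) : ℕ) *
                    coeff (ν' - Finsupp.single ((j.castSucc : Fin (M+1)) : ℕ) 1) (Ex k w) else 0)) := by
            ring
          rw [this]
          exact Submodule.sub_mem _ hsplit hsum_other
        have hcolon := hcz (coeff ν (Ex k w)) (by rw [mul_comm]; exact hzw)
        exact hcolon
  apply mem_of_coeff_Ex k
  intro ν
  exact KEY (D+1) ν (by omega)

lemma cgen_zero (k m : ℕ) (h : k ≠ m + 1) (i : ℕ) : cgen k m i = 0 := by
  unfold cgen; rw [if_neg h]

lemma czD_diag (m : ℕ) : czD m m = Dd m := by unfold czD; rw [if_pos rfl]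

lemma Z_czD_mem (k m : ℕ) (j : Fin m) : Zv (j : ℕ) * czD k m ∈ WW k m := by
  by_cases h : k = m
  · subst h; rw [czD_diag]; exact Z_mul_D_mem _ j
  · unfold czD; rw [if_neg h, mul_zero]; exact Submodule.zero_mem _

/-- the statement of the syzygy theorem for the generic `k × m` system. -/
def STstm (k m : ℕ) : Prop := ∀ s : Fin k → PP, (∑ i, s i * rr m (i : ℕ)) = 0 →
  ∃ (lam : Fin k → Fin k → PP) (h : PP), ∀ i,
    s i = (∑ p, (lam i p - lam p i) * rr m (p : ℕ)) + h * cgen k m (i : ℕ)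

lemma cgen_one_zero : cgen 1 0 0 = 1 := by
  have h := cgen_last 0 0 (le_refl 0)
  rw [h, czD_diag]
  unfold Dd
  exact Matrix.det_fin_zero

theorem ST_all : ∀ k m, k ≤ m + 1 → STstm k m := by
  intro k
  induction k with
  | zero =>
      intro m _ s _
      exact ⟨0, 0, fun i => i.elim0⟩
  | succ k ih =>
      intro m hk1 s hs
      have hk : k ≤ m := by omega
      -- the special case m = 0
      rcases Nat.eq_zero_or_pos m with hm0 | hmpos
      · subst hm0
        have hk0 : k = 0 := by omega
        subst hk0
        refine ⟨0, s 0, fun i => ?_⟩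
        have hi : i = 0 := by
          apply Fin.ext
          omega
        subst hi
        have hcg : cgen (0+1) 0 ((0 : Fin (0+1)) : ℕ) = 1 := cgen_one_zero
        rw [hcg]
        simp
      · -- main case : m = M + 1
        obtain ⟨M, rfl⟩ : ∃ M, m = M + 1 := ⟨m - 1, by omega⟩
        set m := M + 1 with hm
        set ℓ : Fin (k+1) := Fin.last k with hℓ
        have hcast : ∀ i : Fin k, ((i.castSucc : Fin (k+1)) : ℕ) = (i : ℕ) := fun i => rfl
        have hsum : ∑ i : Fin k, s i.castSucc * rr m (i : ℕ) + s ℓ * rr m k = 0 := by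
          rw [← hs, Fin.sum_univ_castSucc]
          rfl
        have h1 : s ℓ * rr m k ∈ WW k m := by
          have : s ℓ * rr m k = - ∑ i : Fin k, s i.castSucc * rr m (i : ℕ) := by
            linear_combination hsum
          rw [this]
          refine Submodule.neg_mem _ (Ideal.sum_mem _ (fun i _ => ?_))
          exact Ideal.mul_mem_left _ _ (Ideal.subset_span ⟨i, rfl⟩)
        have hkM : k ≤ M + 1 := by omega
        have hfr := fr k M
          (cz k M hkM (ih M hkM))
          (fun j => Z_czD_mem k m j)
          (s ℓ) h1
        obtain ⟨y, hy, z, hz, hyz⟩ := Submodule.mem_sup.mp hfr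
        rw [WW, Ideal.mem_span_range_iff_exists_fun] at hy
        obtain ⟨e, he⟩ := hy
        obtain ⟨h, hh⟩ := Ideal.mem_span_singleton'.mp hz
        -- corrected syzygy on the first k rows
        set s' : Fin k → PP :=
          fun i => s i.castSucc + e i * rr m k - h * cgen (k+1) m (i : ℕ) with hs'
        have hsyz' : ∑ i : Fin k, s' i * rr m (i : ℕ) = 0 := by
          have expand : ∀ i : Fin k, s' i * rr m (i : ℕ)
              = s i.castSucc * rr m (i : ℕ) + (e i * rr m (i : ℕ)) * rr m k
                - h * (cgen (k+1) m (i : ℕ) * rr m (i : ℕ)) := by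
            intro i; rw [hs']; ring
          rw [Finset.sum_congr rfl (fun i _ => expand i), Finset.sum_sub_distrib,
            Finset.sum_add_distrib, ← Finset.sum_mul, ← Finset.mul_sum]
          have hcg : ∑ i : Fin k, cgen (k+1) m (i : ℕ) * rr m (i : ℕ)
              = - (czD k m * rr m k) := by
            have h0 := cgen_syz (k+1) m
            rw [Fin.sum_univ_castSucc] at h0
            have hlast : ((Fin.last k : Fin (k+1)) : ℕ) = k := Fin.val_last k
            rw [hlast, cgen_last k m hk] at h0
            have : ∑ i : Fin k, cgen (k+1) m ((i.castSucc : Fin (k+1)) : ℕ) * rr m ((i.castSucc : Fin (k+1)) : ℕ)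
                = ∑ i : Fin k, cgen (k+1) m (i : ℕ) * rr m (i : ℕ) := rfl
            rw [this] at h0
            linear_combination h0
          rw [he, hcg]
          have hsℓ : ∑ i : Fin k, s i.castSucc * rr m (i : ℕ) = - (s ℓ * rr m k) := by
            linear_combination hsum
          rw [hsℓ, ← hyz, ← hh]
          ring
        obtain ⟨lam', h', hlam'⟩ := ih m (by omega) s' hsyz'
        have hcgen0 : ∀ i : ℕ, cgen k m i = 0 := cgen_zero k m (by omega)
        -- assemble
        set lamF : Fin (k+1) → Fin (k+1) → PP := fun i p => if hi : (i : ℕ) < k then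
            (if hp : (p : ℕ) < k then lam' ⟨i, hi⟩ ⟨p, hp⟩ else - e ⟨i, hi⟩) else 0 with hlamF
        have hℓk : ¬ ((ℓ : ℕ) < k) := by
          rw [hℓ, Fin.val_last]; omega
        have hlamA : ∀ q : Fin k, lamF ℓ q.castSucc = 0 := by
          intro q; simp only [hlamF]; exact dif_neg hℓk
        have hlamB : ∀ q : Fin k, lamF q.castSucc ℓ = - e q := by
          intro q; simp only [hlamF]
          rw [dif_pos (show ((q.castSucc : Fin (k+1)) : ℕ) < k from q.is_lt)]
          rw [dif_neg hℓk]
          congr 1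
        have hlamC : lamF ℓ ℓ = 0 := by
          simp only [hlamF]; exact dif_neg hℓk
        have hlamD : ∀ j q : Fin k, lamF j.castSucc q.castSucc = lam' j q := by
          intro j q; simp only [hlamF]
          rw [dif_pos (show ((j.castSucc : Fin (k+1)) : ℕ) < k from j.is_lt)]
          rw [dif_pos (show ((q.castSucc : Fin (k+1)) : ℕ) < k from q.is_lt)]
          congr 1 <;> exact Fin.eta _ _
        refine ⟨lamF, h, ?_⟩
        intro i
        induction i using Fin.lastCases with
        | last =>
            rw [show (Fin.last k) = ℓ from rfl]
            rw [Fin.sum_univ_castSucc]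
            have hterm : ∀ q : Fin k, (lamF ℓ q.castSucc - lamF q.castSucc ℓ)
                * rr m ((q.castSucc : Fin (k+1)) : ℕ) = e q * rr m (q : ℕ) := by
              intro q
              rw [hlamA q, hlamB q, hcast q]
              ring
            rw [Finset.sum_congr rfl (fun q _ => hterm q), he]
            have hlastv : ((ℓ : Fin (k+1)) : ℕ) = k := Fin.val_last k
            rw [hlastv, sub_self, zero_mul, add_zero, cgen_last k m hk, hh, hyz]
        | cast j =>
            rw [Fin.sum_univ_castSucc]
            have hterm : ∀ q : Fin k, (lamF j.castSucc q.castSucc - lamF q.castSucc j.castSucc)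
                * rr m ((q.castSucc : Fin (k+1)) : ℕ)
                = (lam' j q - lam' q j) * rr m (q : ℕ) := by
              intro q
              rw [hlamD j q, hlamD q j, hcast q]
            rw [Finset.sum_congr rfl (fun q _ => hterm q)]
            have hlastt : (lamF j.castSucc (Fin.last k) - lamF (Fin.last k) j.castSucc)
                * rr m ((Fin.last k : Fin (k+1)) : ℕ) = - (e j * rr m k) := by
              rw [show (Fin.last k) = ℓ from rfl, hlamB j, hlamA j, Fin.val_last]
              ring
            rw [hlastt]
            have hcgj : cgen (k+1) m ((j.castSucc : Fin (k+1)) : ℕ) = cgen (k+1) m (j : ℕ) := rfl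
            rw [hcgj]
            have hfin := hlam' j
            rw [hcgen0 (j : ℕ), mul_zero, add_zero] at hfin
            have : s j.castSucc = s' j - e j * rr m k + h * cgen (k+1) m (j : ℕ) := by
              rw [hs']; ring
            rw [this, hfin]
            ring


/-- column reindexing: `0 ↦ n`, `j ↦ j - 1` for `j ≥ 1`. -/
def cmap (n : ℕ) (j : Fin (n+1)) : ℕ := if (j : ℕ) = 0 then n else (j : ℕ) - 1

def colinv (n : ℕ) (c : ℕ) : Fin (n+1) := if h : c < n then ⟨c+1, by omega⟩ else 0

def ι (n : ℕ) : ((Fin n × Fin (n+1)) ⊕ Fin (n+1)) → Sig :=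
  Sum.elim (fun p => Sum.inl ((p.1 : ℕ), cmap n p.2)) (fun j => Sum.inr (cmap n j))

def ρm (n : ℕ) : Sig → ((Fin n × Fin (n+1)) ⊕ Fin (n+1)) := fun s =>
  Sum.elim
    (fun p : ℕ × ℕ => if h : p.1 < n then Sum.inl (⟨p.1, h⟩, colinv n p.2) else Sum.inr 0)
    (fun j => Sum.inr (colinv n j)) s

lemma ρm_inl (i j : ℕ) :
    ρm n (Sum.inl (i, j)) = if h : i < n then Sum.inl ((⟨i, h⟩ : Fin n), colinv n j)
      else Sum.inr 0 := rfl

lemma ρm_inr (j : ℕ) : ρm n (Sum.inr j) = Sum.inr (colinv n j) := rfl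

lemma colinv_cmap (j : Fin (n+1)) : colinv n (cmap n j) = j := by
  unfold colinv cmap
  by_cases h : (j : ℕ) = 0
  · rw [if_pos h, dif_neg (by omega)]
    apply Fin.ext
    rw [Fin.val_zero]
    omega
  · rw [if_neg h, dif_pos (by omega)]
    apply Fin.ext
    show (j : ℕ) - 1 + 1 = (j : ℕ)
    omega

lemma cmap_colinv (c : Fin (n+1)) : cmap n (colinv n (c : ℕ)) = (c : ℕ) := by
  unfold colinv
  by_cases h : (c : ℕ) < n
  · rw [dif_pos h]
    unfold cmap
    rw [if_neg (by show ¬ ((c:ℕ) + 1 = 0); omega)]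
    show (c : ℕ) + 1 - 1 = (c : ℕ)
    omega
  · rw [dif_neg h]
    unfold cmap
    rw [if_pos (by rfl)]
    omega

lemma ρι (s : (Fin n × Fin (n+1)) ⊕ Fin (n+1)) : ρm n (ι n s) = s := by
  rcases s with ⟨i, j⟩ | j
  · show ρm n (Sum.inl ((i : ℕ), cmap n j)) = _
    rw [ρm_inl, dif_pos i.is_lt, colinv_cmap, Fin.eta]
  · show ρm n (Sum.inr (cmap n j)) = _
    rw [ρm_inr, colinv_cmap]

noncomputable def Ff (n : ℕ) : Oamb n →+* PP := (rename (ι n)).toRingHom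
noncomputable def Gg (n : ℕ) : PP →+* Oamb n := (rename (ρm n)).toRingHom

lemma Gg_Ff (p : Oamb n) : Gg n (Ff n p) = p := by
  show (rename (ρm n)) ((rename (ι n)) p) = p
  rw [rename_rename]
  have h : (ρm n) ∘ (ι n) = id := funext ρι
  rw [h, rename_id, AlgHom.id_apply]

@[simp] lemma Ff_zv (j : Fin (n+1)) : Ff n (zv j) = Zv (cmap n j) := by
  show rename (ι n) (X (Sum.inr j)) = _
  rw [rename_X]; rfl

@[simp] lemma Ff_av (i : Fin n) (j : Fin (n+1)) : Ff n (av i j) = Av (i : ℕ) (cmap n j) := by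
  show rename (ι n) (X (Sum.inl (i, j))) = _
  rw [rename_X]; rfl

/-- the column permutation as an equivalence. -/
noncomputable def eperm (n : ℕ) : Fin (n+1) ≃ Fin (n+1) where
  toFun j := ⟨cmap n j, by unfold cmap; split <;> omega⟩
  invFun c := colinv n (c : ℕ)
  left_inv j := colinv_cmap j
  right_inv c := by
    apply Fin.ext
    show cmap n (colinv n (c : ℕ)) = (c : ℕ)
    exact cmap_colinv c

lemma Ff_fv (i : Fin n) : Ff n (fv i) = rr (n+1) (i : ℕ) := by
  rw [fv, map_sum, rr]
  refine Fintype.sum_equiv (eperm n) _ _ (fun j => ?_)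
  rw [map_mul, Ff_av, Ff_zv]
  rfl

lemma Ff_Δ (hn : 1 ≤ n) : Ff n (Δ₁ n) = Dd n := by
  rw [Δ₁, RingHom.map_det, Dd]
  congr 1
  refine Matrix.ext (fun i j => ?_)
  show Ff n (av i j.succ) = MatA n i j
  rw [Ff_av]
  have : cmap n j.succ = (j : ℕ) := by
    unfold cmap
    rw [if_neg (by simp [Fin.val_succ])]
    simp [Fin.val_succ]
  rw [this]; rfl

lemma Gg_Zv_n : Gg n (Zv n) = zv 0 := by
  show rename (ρm n) (X (Sum.inr n)) = _
  rw [rename_X, ρm_inr]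
  unfold colinv
  rw [dif_neg (by omega)]
  rfl

lemma Gg_Av (i j : Fin n) : Gg n (Av (i : ℕ) (j : ℕ)) = av i j.succ := by
  show rename (ρm n) (X (Sum.inl ((i:ℕ), (j:ℕ)))) = _
  rw [rename_X, ρm_inl, dif_pos i.is_lt]
  unfold colinv
  rw [dif_pos j.is_lt]
  have h1 : (⟨(i : ℕ), i.is_lt⟩ : Fin n) = i := Fin.eta _ _
  have h2 : (⟨(j : ℕ)+1, by omega⟩ : Fin (n+1)) = j.succ := by
    apply Fin.ext; simp [Fin.val_succ]
  rw [h1, h2]; rfl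

lemma Gg_Zv (j : Fin n) : Gg n (Zv (j : ℕ)) = zv j.succ := by
  show rename (ρm n) (X (Sum.inr (j : ℕ))) = _
  rw [rename_X, ρm_inr]
  unfold colinv
  rw [dif_pos j.is_lt]
  have h2 : (⟨(j : ℕ)+1, by omega⟩ : Fin (n+1)) = j.succ := by
    apply Fin.ext; simp [Fin.val_succ]
  rw [h2]; rfl

lemma Gg_rr (i : Fin n) : Gg n (rr n (i : ℕ)) = fv i - av i 0 * zv 0 := by
  rw [rr, map_sum]
  have hterm : ∀ j : Fin n, Gg n (Av (i:ℕ) (j:ℕ) * Zv (j:ℕ)) = av i j.succ * zv j.succ := by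
    intro j
    rw [map_mul, Gg_Av, Gg_Zv]
  rw [Finset.sum_congr rfl (fun j _ => hterm j)]
  rw [fv, Fin.sum_univ_succ]
  ring

lemma Gg_Dd : Gg n (Dd n) = Δ₁ n := by
  rw [Dd, RingHom.map_det, Δ₁]
  congr 1
  refine Matrix.ext (fun i j => ?_)
  show Gg n (Av (i:ℕ) (j:ℕ)) = _
  rw [Gg_Av]
  rfl


/-- colon membership from the action on generators. -/
lemma mem_colon_zv {n : ℕ} {I : Ideal (Oamb n)} {x : Oamb n}
    (h : ∀ j : Fin (n+1), x * zv j ∈ I) :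
    x ∈ Submodule.colon I (Ideal.span (Set.range fun j : Fin (n+1) => zv j)) := by
  rw [Submodule.mem_colon]
  intro p hp
  induction hp using Submodule.span_induction with
  | mem g hg =>
      obtain ⟨j, rfl⟩ := hg
      simpa [smul_eq_mul] using h j
  | zero => simp
  | add a b _ _ ha hb => rw [smul_add]; exact Ideal.add_mem _ ha hb
  | smul r a _ ha =>
      have heq : x • (r • a) = r * (x • a) := by
        simp only [smul_eq_mul]; ring
      rw [heq]
      exact Ideal.mul_mem_left _ _ ha

/-- Cramer's rule in the ambient ring. -/
lemma cramer_amb (n : ℕ) (jj : Fin n) :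
    Δ₁ n * zv jj.succ ∈ Ideal.span (insert (zv 0) (Set.range fun i : Fin n => fv i)) := by
  set I := Ideal.span (insert (zv 0) (Set.range fun i : Fin n => fv i)) with hI
  set Mq : Matrix (Fin n) (Fin n) (Oamb n) := Matrix.of (fun i j => av i j.succ) with hMq
  set zq : Fin n → Oamb n := fun j => zv j.succ with hzq
  have hMz : Mq.mulVec zq = fun i => fv i - av i 0 * zv 0 := by
    funext i
    show ∑ j, Mq i j * zq j = _
    simp only [hMq, hzq, Matrix.of_apply]
    rw [fv, Fin.sum_univ_succ]
    ring
  have key : (Δ₁ n) • zq = Mq.adjugate.mulVec (Mq.mulVec zq) := by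
    rw [Matrix.mulVec_mulVec, Matrix.adjugate_mul, Matrix.smul_mulVec,
      Matrix.one_mulVec]
    rfl
  have hj := congrFun key jj
  simp only [Pi.smul_apply, smul_eq_mul, hzq] at hj
  rw [hj, hMz]
  show ∑ i, Mq.adjugate jj i * _ ∈ I
  refine Ideal.sum_mem _ (fun i _ => ?_)
  have h1 : fv i ∈ I := Ideal.subset_span (Set.mem_insert_of_mem _ ⟨i, rfl⟩)
  have h2 : zv 0 ∈ I := Ideal.subset_span (Set.mem_insert _ _)
  rw [mul_sub]
  exact Submodule.sub_mem _ (Ideal.mul_mem_left _ _ h1)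
    (Ideal.mul_mem_left _ _ (Ideal.mul_mem_left _ _ h2))


end ResInt

section
open ResInt

/-- The colon ideal equality `(z_1, f_1, …, f_n) : (z_1, …, z_{n+1}) = (z_1, f_1, …, f_n, Δ₁)`
in `O_amb`. -/
theorem colon_eq_residual (n : ℕ) (hn : 1 ≤ n) :
    Submodule.colon
        (Ideal.span (insert (zv 0) (Set.range (fun i : Fin n => fv i))))
        (Ideal.span (Set.range (fun j : Fin (n+1) => zv j)))
      = Ideal.span (insert (zv 0) (insert (Δ₁ n) (Set.range (fun i : Fin n => fv i)))) := by
  set I : Ideal (Oamb n) := Ideal.span (insert (zv 0) (Set.range (fun i : Fin n => fv i)))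
    with hIdef
  set J : Ideal (Oamb n) :=
    Ideal.span (insert (zv 0) (insert (Δ₁ n) (Set.range (fun i : Fin n => fv i)))) with hJdef
  have hz0I : zv 0 ∈ I := Ideal.subset_span (Set.mem_insert _ _)
  have hfvI : ∀ i : Fin n, fv i ∈ I := fun i =>
    Ideal.subset_span (Set.mem_insert_of_mem _ ⟨i, rfl⟩)
  have hz0J : zv 0 ∈ J := Ideal.subset_span (Set.mem_insert _ _)
  have hΔJ : Δ₁ n ∈ J := Ideal.subset_span (Set.mem_insert_of_mem _ (Set.mem_insert _ _))
  have hfvJ : ∀ i : Fin n, fv i ∈ J := fun i =>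
    Ideal.subset_span (Set.mem_insert_of_mem _ (Set.mem_insert_of_mem _ ⟨i, rfl⟩))
  apply le_antisymm
  · -- hard direction
    intro w hw
    -- extract the colon condition at `z_n`
    set q : Fin (n+1) := ⟨n, by omega⟩ with hqdef
    have hq : w * zv q ∈ I := by
      have hz : zv q ∈ Ideal.span (Set.range fun j : Fin (n+1) => zv j) :=
        Ideal.subset_span ⟨q, rfl⟩
      have := Submodule.mem_colon.mp hw _ hz
      simpa [smul_eq_mul] using this
    rw [hIdef, Ideal.mem_span_insert] at hq
    obtain ⟨a, zz, hzz, heq⟩ := hq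
    rw [Ideal.mem_span_range_iff_exists_fun] at hzz
    obtain ⟨g, hg⟩ := hzz
    -- transfer to the universal ring
    have hcq : cmap n q = n - 1 := by
      unfold cmap
      have hqv : (q : ℕ) = n := rfl
      rw [hqv, if_neg (by omega)]
    have hc0 : cmap n (0 : Fin (n+1)) = n := by
      unfold cmap
      have h0v : ((0 : Fin (n+1)) : ℕ) = 0 := rfl
      rw [h0v, if_pos rfl]
    have hF : Ff n w * Zv (n-1)
        = Ff n a * Zv n + ∑ i : Fin n, Ff n (g i) * rr (n+1) (i : ℕ) := by
      have h1 := congrArg (Ff n) heq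
      rw [map_mul, map_add, map_mul, Ff_zv, Ff_zv, hcq, hc0, ← hg, map_sum] at h1
      rw [h1]
      congr 1
      refine Finset.sum_congr rfl (fun i _ => ?_)
      rw [map_mul, Ff_fv]
    -- kill the variable Zv n
    have hEv : Ev (Sum.inr n) (Ff n w) * Zv (n-1) ∈ WW n n := by
      have h2 := congrArg (Ev (Sum.inr n)) hF
      rw [map_mul, map_add, map_mul, map_sum, Ev_Zv_self, mul_zero,
        Ev_Zv_ne n (n-1) (by omega)] at h2
      rw [h2, zero_add]
      refine Ideal.sum_mem _ (fun i _ => ?_)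
      rw [map_mul, Ev_rr n (i : ℕ)]
      exact Ideal.mul_mem_left _ _ (Ideal.subset_span ⟨i, rfl⟩)
    -- apply the main colon lemma
    obtain ⟨N, hN⟩ : ∃ N, n = N + 1 := ⟨n - 1, by omega⟩
    have hEv' : Ev (Sum.inr n) (Ff n w) * Zv N ∈ WW (N+1) (N+1) := by
      have hN1 : n - 1 = N := by omega
      rw [hN1] at hEv
      rw [← hN]
      exact hEv
    have hcz0 := cz (N+1) N (by omega) (ST_all (N+1) N (by omega)) _ hEv'
    rw [czD_diag (N+1)] at hcz0
    have hcz : Ev (Sum.inr n) (Ff n w) ∈ WW n n ⊔ Ideal.span {Dd n} := by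
      have hWW : WW n n = WW (N+1) (N+1) := by rw [hN]
      have hDd : Dd n = Dd (N+1) := by rw [hN]
      rw [hWW, hDd]
      exact hcz0
    -- reconstruct `Ff n w`
    have hFw : Ff n w ∈ (WW n n ⊔ Ideal.span {Dd n}) ⊔ Ideal.span {Zv n} := by
      have hsub : Ff n w - Ev (Sum.inr n) (Ff n w) ∈ Ideal.span {Zv n} :=
        sub_Ev_mem (Sum.inr n) (Ff n w)
      have hdec : Ff n w
          = Ev (Sum.inr n) (Ff n w) + (Ff n w - Ev (Sum.inr n) (Ff n w)) := by ring
      rw [hdec]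
      exact Submodule.add_mem _ (Submodule.mem_sup_left hcz) (Submodule.mem_sup_right hsub)
    -- pull back along Gg
    obtain ⟨u1, hu1, d2, hd2, hsum2⟩ := Submodule.mem_sup.mp hFw
    obtain ⟨u0, hu0, d1, hd1, hsum1⟩ := Submodule.mem_sup.mp hu1
    rw [WW, Ideal.mem_span_range_iff_exists_fun] at hu0
    obtain ⟨c, hc⟩ := hu0
    obtain ⟨c1, hc1⟩ := Ideal.mem_span_singleton'.mp hd1
    obtain ⟨c2, hc2⟩ := Ideal.mem_span_singleton'.mp hd2
    have hwG : w = Gg n (Ff n w) := (Gg_Ff w).symm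
    rw [hwG, ← hsum2, ← hsum1, ← hc, ← hc1, ← hc2, map_add, map_add, map_mul, map_mul,
      map_sum, Gg_Dd, Gg_Zv_n]
    refine Ideal.add_mem _ (Ideal.add_mem _ ?_ ?_) ?_
    · refine Ideal.sum_mem _ (fun i _ => ?_)
      rw [map_mul, Gg_rr i]
      rw [mul_sub]
      refine Submodule.sub_mem _ (Ideal.mul_mem_left _ _ (hfvJ i)) ?_
      exact Ideal.mul_mem_left _ _ (Ideal.mul_mem_left _ _ hz0J)
    · exact Ideal.mul_mem_left _ _ hΔJ
    · exact Ideal.mul_mem_left _ _ hz0J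
  · -- easy direction: each generator is in the colon ideal
    rw [hJdef, Ideal.span_le]
    rintro x hx
    rcases Set.mem_insert_iff.mp hx with rfl | hx2
    · -- x = zv 0
      apply mem_colon_zv
      intro j
      rw [mul_comm]
      exact Ideal.mul_mem_left _ _ hz0I
    rcases Set.mem_insert_iff.mp hx2 with rfl | hx3
    · -- x = Δ₁ n
      apply mem_colon_zv
      intro j
      induction j using Fin.cases with
      | zero => exact Ideal.mul_mem_left _ _ hz0I
      | succ jj => exact cramer_amb n jj
    · -- x = fv i
      obtain ⟨i, rfl⟩ := hx3
      apply mem_colon_zv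
      intro j
      rw [mul_comm]
      exact Ideal.mul_mem_left _ _ (hfvI i)

end
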